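/- Let X1, X2 be finite-valued random variables and suppose U achieves the minimum entropy among all random variables W satisfying W = g1(X1) = g2(X2) a.s. for some g1, g2 and I(X1; X2 | W) = 0. Then any other minimizer U' satisfies H(U) = H(U') and there exist functions f, f' with U = f(U') and U' = f'(U) almost surely. -/

import Mathlib

open Real
open scoped BigOperators Classical

/-- The distribution (pushforward pmf) of a random variable `X` under the weight
function `p` on a finite sample space. -/
noncomputable def dist {Ω S : Type*} [Fintype Ω] (p : Ω → ℝ) (X : Ω → S) (s : S) : ℝ :=
  ∑ ω : Ω, if X ω = s then p ω else 0

/-- Shannon entropy of a finite-valued random variable. -/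
noncomputable def ent {Ω S : Type*} [Fintype Ω] [Fintype S] (p : Ω → ℝ) (X : Ω → S) : ℝ :=
  -∑ s : S, dist p X s * Real.log (dist p X s)

/-- Shannon conditional entropy `H(X | Y)`, via the chain rule. -/
noncomputable def condEnt {Ω S T : Type*} [Fintype Ω] [Fintype S] [Fintype T]
    (p : Ω → ℝ) (X : Ω → S) (Y : Ω → T) : ℝ :=
  ent p (fun ω => (X ω, Y ω)) - ent p Y

/-- Shannon mutual information `I(X; Y)`. -/
noncomputable def mutInfo {Ω S T : Type*} [Fintype Ω] [Fintype S] [Fintype T]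
    (p : Ω → ℝ) (X : Ω → S) (Y : Ω → T) : ℝ :=
  ent p X + ent p Y - ent p (fun ω => (X ω, Y ω))

/-- Conditional mutual information `I(X; Y | Z)`. -/
noncomputable def condMutInfo {Ω S T V : Type*} [Fintype Ω] [Fintype S] [Fintype T] [Fintype V]
    (p : Ω → ℝ) (X : Ω → S) (Y : Ω → T) (Z : Ω → V) : ℝ :=
  ent p (fun ω => (X ω, Z ω)) + ent p (fun ω => (Y ω, Z ω))
    - ent p (fun ω => (X ω, Y ω, Z ω)) - ent p Z

/-- `p` is a probability mass function on the finite sample space. -/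
def IsPMF {Ω : Type*} [Fintype Ω] (p : Ω → ℝ) : Prop :=
  (∀ ω, 0 ≤ p ω) ∧ ∑ ω : Ω, p ω = 1

/-- Equality `p`-almost surely. -/
def AEEq {Ω S : Type*} (p : Ω → ℝ) (f g : Ω → S) : Prop :=
  ∀ ω, p ω ≠ 0 → f ω = g ω

/-- Kullback–Leibler divergence between two pmfs on a finite type. -/
noncomputable def klDiv {A : Type*} [Fintype A] (q r : A → ℝ) : ℝ :=
  ∑ a : A, q a * Real.log (q a / r a)

section Aux

variable {Ω S T : Type*} [Fintype Ω] [Fintype S] [Fintype T]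

lemma dist_nonneg' (p : Ω → ℝ) (hp : ∀ ω, 0 ≤ p ω) (X : Ω → S) (s : S) :
    0 ≤ dist p X s :=
  Finset.sum_nonneg fun ω _ => by split <;> simp [hp ω]

lemma le_dist (p : Ω → ℝ) (hp : ∀ ω, 0 ≤ p ω) (X : Ω → S) (ω : Ω) :
    p ω ≤ dist p X (X ω) := by
  have := Finset.single_le_sum (f := fun ω' => if X ω' = X ω then p ω' else 0)
    (fun ω' _ => by by_cases h : X ω' = X ω <;> simp [h, hp ω']) (Finset.mem_univ ω)
  simpa [_root_.dist] using this

lemma dist_le_dist (p : Ω → ℝ) (hp : ∀ ω, 0 ≤ p ω) (X : Ω → S) (Y : Ω → T)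
    (s : S) (t : T) (h : ∀ ω, X ω = s → Y ω = t) :
    dist p X s ≤ dist p Y t := by
  refine Finset.sum_le_sum fun ω _ => ?_
  by_cases hx : X ω = s
  · simp [hx, h ω hx]
  · simp only [hx, if_false]
    split <;> simp [hp ω]

lemma sum_dist_mul (p : Ω → ℝ) (X : Ω → S) (F : S → ℝ) :
    ∑ s, dist p X s * F s = ∑ ω, p ω * F (X ω) := by
  simp only [_root_.dist]
  simp_rw [Finset.sum_mul, ite_mul, zero_mul]
  rw [Finset.sum_comm]
  refine Finset.sum_congr rfl fun ω _ => ?_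
  simpa using Finset.sum_ite_eq Finset.univ (X ω) (fun s => p ω * F s)

lemma ent_eq (p : Ω → ℝ) (X : Ω → S) :
    ent p X = -∑ ω, p ω * Real.log (dist p X (X ω)) := by
  rw [ent, sum_dist_mul p X (fun s => Real.log (_root_.dist p X s))]

lemma sum_dist (p : Ω → ℝ) (X : Ω → S) : ∑ s, dist p X s = ∑ ω, p ω := by
  simpa using sum_dist_mul p X (fun _ => 1)

lemma sum_dist_pair (p : Ω → ℝ) (A : Ω → S) (B : Ω → T) (b : T) :
    ∑ a, dist p (fun ω => (A ω, B ω)) (a, b) = dist p B b := by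
  simp only [_root_.dist]
  rw [Finset.sum_comm]
  refine Finset.sum_congr rfl fun ω _ => ?_
  simp only [Prod.mk.injEq, ite_and]
  simpa using Finset.sum_ite_eq Finset.univ (A ω) (fun _ => if B ω = b then p ω else 0)

end Aux

section CI

variable {Ω S1 S2 SU : Type*} [Fintype Ω] [Fintype S1] [Fintype S2] [Fintype SU]

/-- `I(X1; X2 | U) = 0` implies conditional independence (the factorization of
the joint distribution). -/
lemma ci_of_cmi_zero (p : Ω → ℝ) (hp : IsPMF p) (X1 : Ω → S1) (X2 : Ω → S2) (U : Ω → SU)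
    (h : condMutInfo p X1 X2 U = 0) (x1 : S1) (x2 : S2) (u : SU) :
    dist p (fun ω => (X1 ω, X2 ω, U ω)) (x1, x2, u) * dist p U u
      = dist p (fun ω => (X1 ω, U ω)) (x1, u) * dist p (fun ω => (X2 ω, U ω)) (x2, u) := by
  obtain ⟨hp0, hp1⟩ := hp
  set q : S1 × S2 × SU → ℝ := dist p (fun ω => (X1 ω, X2 ω, U ω)) with hq
  set d1 : S1 × SU → ℝ := dist p (fun ω => (X1 ω, U ω)) with hd1
  set d2 : S2 × SU → ℝ := dist p (fun ω => (X2 ω, U ω)) with hd2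
  set dU : SU → ℝ := dist p U with hdU
  -- basic positivity / monotonicity facts
  have hqnn : ∀ a, 0 ≤ q a := fun a => dist_nonneg' p hp0 _ a
  have hd1nn : ∀ a, 0 ≤ d1 a := fun a => dist_nonneg' p hp0 _ a
  have hd2nn : ∀ a, 0 ≤ d2 a := fun a => dist_nonneg' p hp0 _ a
  have hdUnn : ∀ a, 0 ≤ dU a := fun a => dist_nonneg' p hp0 _ a
  have hqd1 : ∀ a : S1 × S2 × SU, q a ≤ d1 (a.1, a.2.2) :=
    fun a => dist_le_dist p hp0 _ _ a (a.1, a.2.2)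
      (fun ω hω => by
        rw [← hω])
  have hqd2 : ∀ a : S1 × S2 × SU, q a ≤ d2 (a.2.1, a.2.2) :=
    fun a => dist_le_dist p hp0 _ _ a (a.2.1, a.2.2)
      (fun ω hω => by rw [← hω])
  have hqdU : ∀ a : S1 × S2 × SU, q a ≤ dU a.2.2 :=
    fun a => dist_le_dist p hp0 _ _ a a.2.2 (fun ω hω => by rw [← hω])
  have hd1dU : ∀ a : S1 × SU, d1 a ≤ dU a.2 :=
    fun a => dist_le_dist p hp0 _ _ a a.2 (fun ω hω => by rw [← hω])
  -- the "ratio" function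
  set R : S1 × S2 × SU → ℝ :=
    fun a => if q a = 0 then 1 else d1 (a.1, a.2.2) * d2 (a.2.1, a.2.2) / (q a * dU a.2.2)
    with hR
  have hRpos : ∀ a, q a ≠ 0 → 0 < R a := by
    intro a ha
    have hqa : 0 < q a := lt_of_le_of_ne (hqnn a) (Ne.symm ha)
    have h1 : 0 < d1 (a.1, a.2.2) := lt_of_lt_of_le hqa (hqd1 a)
    have h2 : 0 < d2 (a.2.1, a.2.2) := lt_of_lt_of_le hqa (hqd2 a)
    have hU : 0 < dU a.2.2 := lt_of_lt_of_le hqa (hqdU a)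
    rw [hR]
    simp only [ha, if_false]
    exact div_pos (mul_pos h1 h2) (mul_pos hqa hU)
  -- Step A : ∑ q log R = 0
  have stepA : ∑ a, q a * Real.log (R a) = 0 := by
    have hA : ∑ a, q a * Real.log (R a)
        = ∑ ω, p ω * Real.log (R (X1 ω, X2 ω, U ω)) :=
      sum_dist_mul p (fun ω => (X1 ω, X2 ω, U ω)) (fun a => Real.log (R a))
    have hB : ∀ ω : Ω, p ω * Real.log (R (X1 ω, X2 ω, U ω))
        = p ω * Real.log (d1 (X1 ω, U ω)) + p ω * Real.log (d2 (X2 ω, U ω))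
          - p ω * Real.log (q (X1 ω, X2 ω, U ω)) - p ω * Real.log (dU (U ω)) := by
      intro ω
      by_cases hpω : p ω = 0
      · simp [hpω]
      · have hple : p ω ≤ q (X1 ω, X2 ω, U ω) := le_dist p hp0 _ ω
        have hppos : 0 < p ω := lt_of_le_of_ne (hp0 ω) (Ne.symm hpω)
        have hqa : (0:ℝ) < q (X1 ω, X2 ω, U ω) := lt_of_lt_of_le hppos hple
        have hqa' : q (X1 ω, X2 ω, U ω) ≠ 0 := ne_of_gt hqa
        have h1 : (0:ℝ) < d1 (X1 ω, U ω) := lt_of_lt_of_le hqa (hqd1 (X1 ω, X2 ω, U ω))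
        have h2 : (0:ℝ) < d2 (X2 ω, U ω) := lt_of_lt_of_le hqa (hqd2 (X1 ω, X2 ω, U ω))
        have hU : (0:ℝ) < dU (U ω) := lt_of_lt_of_le hqa (hqdU (X1 ω, X2 ω, U ω))
        have : R (X1 ω, X2 ω, U ω)
            = d1 (X1 ω, U ω) * d2 (X2 ω, U ω) / (q (X1 ω, X2 ω, U ω) * dU (U ω)) := by
          rw [hR]; simp only [hqa', if_false]
        rw [this, Real.log_div (ne_of_gt (mul_pos h1 h2)) (ne_of_gt (mul_pos hqa hU)),
          Real.log_mul (ne_of_gt h1) (ne_of_gt h2),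
          Real.log_mul hqa' (ne_of_gt hU)]
        ring
    have hC : condMutInfo p X1 X2 U
        = -∑ ω, p ω * Real.log (R (X1 ω, X2 ω, U ω)) := by
      have hD : ∑ ω, p ω * Real.log (R (X1 ω, X2 ω, U ω))
          = ∑ ω, p ω * Real.log (d1 (X1 ω, U ω)) + ∑ ω, p ω * Real.log (d2 (X2 ω, U ω))
            - ∑ ω, p ω * Real.log (q (X1 ω, X2 ω, U ω)) - ∑ ω, p ω * Real.log (dU (U ω)) := by
        simp_rw [hB]
        rw [Finset.sum_sub_distrib, Finset.sum_sub_distrib, Finset.sum_add_distrib]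
      simp only [condMutInfo, ent_eq]
      simp only [← hq, ← hd1, ← hd2, ← hdU]
      rw [hD]
      ring
    rw [hA]
    rw [hC] at h
    linarith
  -- The comparison pmf
  set W : S1 × S2 × SU → ℝ :=
    fun a => (if dU a.2.2 = 0 then 0 else (dU a.2.2)⁻¹) * (d1 (a.1, a.2.2) * d2 (a.2.1, a.2.2))
    with hW
  have hWnn : ∀ a, 0 ≤ W a := by
    intro a
    rw [hW]
    dsimp only
    split
    · simp [mul_nonneg, hd1nn, hd2nn]
    · exact mul_nonneg (inv_nonneg.2 (hdUnn _)) (mul_nonneg (hd1nn _) (hd2nn _))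
  have hsumW : ∑ a : S1 × S2 × SU, W a = 1 := by
    have hm1 : ∀ v, ∑ y1, d1 (y1, v) = dU v := fun v => sum_dist_pair p X1 U v
    have hm2 : ∀ v, ∑ y2, d2 (y2, v) = dU v := fun v => sum_dist_pair p X2 U v
    calc ∑ a : S1 × S2 × SU, W a
        = ∑ y1, ∑ y2, ∑ v, (if dU v = 0 then 0 else (dU v)⁻¹) * d1 (y1, v) * d2 (y2, v) := by
          rw [Fintype.sum_prod_type]
          refine Finset.sum_congr rfl fun y1 _ => ?_
          rw [Fintype.sum_prod_type]
          refine Finset.sum_congr rfl fun y2 _ => Finset.sum_congr rfl fun v _ => ?_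
          rw [hW]; ring
      _ = ∑ y1, ∑ v, ∑ y2, (if dU v = 0 then 0 else (dU v)⁻¹) * d1 (y1, v) * d2 (y2, v) := by
          exact Finset.sum_congr rfl fun y1 _ => Finset.sum_comm
      _ = ∑ y1, ∑ v, (if dU v = 0 then 0 else (dU v)⁻¹) * d1 (y1, v) * dU v := by
          refine Finset.sum_congr rfl fun y1 _ => Finset.sum_congr rfl fun v _ => ?_
          rw [← Finset.mul_sum, hm2 v]
      _ = ∑ v, ∑ y1, (if dU v = 0 then 0 else (dU v)⁻¹) * d1 (y1, v) * dU v := Finset.sum_comm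
      _ = ∑ v, dU v := by
          refine Finset.sum_congr rfl fun v _ => ?_
          by_cases hv : dU v = 0
          · simp [hv]
          · simp only [hv, if_false]
            have : ∑ y1, (dU v)⁻¹ * d1 (y1, v) * dU v = (dU v)⁻¹ * (∑ y1, d1 (y1, v)) * dU v := by
              rw [Finset.mul_sum, Finset.sum_mul]
            rw [this, hm1 v]
            field_simp
      _ = ∑ ω, p ω := sum_dist p U
      _ = 1 := hp1
  have hsumq : ∑ a : S1 × S2 × SU, q a = 1 := by
    rw [hq, sum_dist p _, hp1]
  -- pointwise bounds
  have hlog_le : ∀ a : S1 × S2 × SU, q a * Real.log (R a) ≤ q a * (R a - 1) := by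
    intro a
    by_cases ha : q a = 0
    · simp [ha]
    · exact mul_le_mul_of_nonneg_left (Real.log_le_sub_one_of_pos (hRpos a ha)) (hqnn a)
  have hqR_le_W : ∀ a : S1 × S2 × SU, q a * R a ≤ W a := by
    intro a
    by_cases ha : q a = 0
    · rw [ha, zero_mul]; exact hWnn a
    · have hqa : 0 < q a := lt_of_le_of_ne (hqnn a) (Ne.symm ha)
      have hU : 0 < dU a.2.2 := lt_of_lt_of_le hqa (hqdU a)
      have hU' : dU a.2.2 ≠ 0 := ne_of_gt hU
      refine le_of_eq ?_
      rw [hR, hW]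
      simp only [ha, if_false, hU']
      field_simp
  -- chain of (in)equalities
  have e1 : ∑ a : S1 × S2 × SU, q a * (R a - 1) = (∑ a, q a * R a) - 1 := by
    simp_rw [mul_sub, mul_one]
    rw [Finset.sum_sub_distrib, hsumq]
  have ineq1 : (0:ℝ) ≤ ∑ a : S1 × S2 × SU, q a * (R a - 1) := by
    rw [← stepA]
    exact Finset.sum_le_sum fun a _ => hlog_le a
  have ineq2 : ∑ a : S1 × S2 × SU, q a * R a ≤ 1 := by
    rw [← hsumW]
    exact Finset.sum_le_sum fun a _ => hqR_le_W a
  have hsumqR : ∑ a : S1 × S2 × SU, q a * R a = 1 := by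
    have := e1
    have h0 : ∑ a : S1 × S2 × SU, q a * (R a - 1) ≤ 0 := by linarith
    linarith
  have hsub0 : ∑ a : S1 × S2 × SU, q a * (R a - 1) = 0 := by
    rw [e1, hsumqR]; ring
  have hptlog : ∀ a : S1 × S2 × SU, q a * Real.log (R a) = q a * (R a - 1) :=
    fun a => (Finset.sum_eq_sum_iff_of_le (fun a _ => hlog_le a)).1
      (stepA.trans hsub0.symm) a (Finset.mem_univ a)
  have hptW : ∀ a : S1 × S2 × SU, q a * R a = W a :=
    fun a => (Finset.sum_eq_sum_iff_of_le (fun a _ => hqR_le_W a)).1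
      (hsumqR.trans hsumW.symm) a (Finset.mem_univ a)
  -- conclude
  by_cases hqa : q (x1, x2, u) = 0
  · by_cases hu : dU u = 0
    · have h1 : d1 (x1, u) = 0 :=
        le_antisymm (by simpa [hu] using hd1dU (x1, u)) (hd1nn (x1, u))
      rw [hqa, h1, zero_mul, zero_mul]
    · have := hptW (x1, x2, u)
      rw [hqa, zero_mul] at this
      rw [hW] at this
      simp only [hu, if_false] at this
      have h12 : d1 (x1, u) * d2 (x2, u) = 0 := by
        have hUpos : 0 < dU u := lt_of_le_of_ne (hdUnn u) (Ne.symm hu)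
        rcases mul_eq_zero.1 this.symm with h | h
        · exact absurd h (inv_ne_zero hu)
        · exact h
      rw [hqa, zero_mul, ← h12]
  · have hqpos : 0 < q (x1, x2, u) := lt_of_le_of_ne (hqnn _) (Ne.symm hqa)
    have hUpos : 0 < dU u := lt_of_lt_of_le hqpos (hqdU (x1, x2, u))
    have hR1 : R (x1, x2, u) = 1 := by
      have hl := hptlog (x1, x2, u)
      have hRp := hRpos (x1, x2, u) hqa
      by_contra hne
      have := Real.log_lt_sub_one_of_pos hRp hne
      have : q (x1, x2, u) * Real.log (R (x1, x2, u)) < q (x1, x2, u) * (R (x1, x2, u) - 1) :=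
        mul_lt_mul_of_pos_left this hqpos
      linarith [hl]
    rw [hR] at hR1
    simp only [hqa, if_false] at hR1
    rw [div_eq_one_iff_eq (ne_of_gt (mul_pos hqpos hUpos))] at hR1
    rw [← hR1]

/-- Under conditional independence given `U`, any a.s. common function of `X1` and
`X2` is a.s. determined by `U`. -/
lemma common_eq {T : Type*} [Fintype T]
    (p : Ω → ℝ) (hp : IsPMF p) (X1 : Ω → S1) (X2 : Ω → S2) (U : Ω → SU)
    (hci : condMutInfo p X1 X2 U = 0)
    (V : Ω → T) (g1 : S1 → T) (hg1 : AEEq p V (fun ω => g1 (X1 ω)))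
    (g2 : S2 → T) (hg2 : AEEq p V (fun ω => g2 (X2 ω)))
    (ω ω' : Ω) (hω : p ω ≠ 0) (hω' : p ω' ≠ 0) (hU : U ω = U ω') :
    V ω = V ω' := by
  have hp0 := hp.1
  have key := ci_of_cmi_zero p hp X1 X2 U hci (X1 ω) (X2 ω') (U ω)
  have hppos : 0 < p ω := lt_of_le_of_ne (hp0 ω) (Ne.symm hω)
  have hppos' : 0 < p ω' := lt_of_le_of_ne (hp0 ω') (Ne.symm hω')
  have h1 : 0 < dist p (fun ω => (X1 ω, U ω)) (X1 ω, U ω) :=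
    lt_of_lt_of_le hppos (le_dist p hp0 (fun ω => (X1 ω, U ω)) ω)
  have h2 : 0 < dist p (fun ω => (X2 ω, U ω)) (X2 ω', U ω) := by
    rw [hU]
    exact lt_of_lt_of_le hppos' (le_dist p hp0 (fun ω => (X2 ω, U ω)) ω')
  have hq : dist p (fun ω => (X1 ω, X2 ω, U ω)) (X1 ω, X2 ω', U ω) ≠ 0 := by
    intro h0
    rw [h0, zero_mul] at key
    have := mul_pos h1 h2
    linarith
  obtain ⟨ω'', _, hω''⟩ := Finset.exists_ne_zero_of_sum_ne_zero hq
  have hpω'' : p ω'' ≠ 0 := by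
    intro h0
    apply hω''
    split <;> simp [h0]
  have heq : (X1 ω'', X2 ω'', U ω'') = (X1 ω, X2 ω', U ω) := by
    by_contra hne
    apply hω''
    simp [hne]
  have hX1 : X1 ω'' = X1 ω := congrArg (fun t => t.1) heq
  have hX2 : X2 ω'' = X2 ω' := congrArg (fun t => t.2.1) heq
  calc V ω = g1 (X1 ω) := hg1 ω hω
    _ = g1 (X1 ω'') := by rw [hX1]
    _ = V ω'' := (hg1 ω'' hpω'').symm
    _ = g2 (X2 ω'') := hg2 ω'' hpω''
    _ = g2 (X2 ω') := by rw [hX2]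
    _ = V ω' := (hg2 ω' hω').symm

end CI

theorem stmt19 {Ω S1 S2 SU SU' : Type} [Fintype Ω] [Fintype S1] [Fintype S2]
    [Fintype SU] [Fintype SU']
    (p : Ω → ℝ) (hp : IsPMF p) (X1 : Ω → S1) (X2 : Ω → S2)
    (U : Ω → SU)
    (hUc : (∃ g1 : S1 → SU, AEEq p U (fun ω => g1 (X1 ω))) ∧
           (∃ g2 : S2 → SU, AEEq p U (fun ω => g2 (X2 ω))) ∧
           condMutInfo p X1 X2 U = 0)
    (hUmin : ∀ (T : Type) [Fintype T] (W : Ω → T),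
      (∃ g1 : S1 → T, AEEq p W (fun ω => g1 (X1 ω))) →
      (∃ g2 : S2 → T, AEEq p W (fun ω => g2 (X2 ω))) →
      condMutInfo p X1 X2 W = 0 → ent p U ≤ ent p W)
    (U' : Ω → SU')
    (hU'c : (∃ g1 : S1 → SU', AEEq p U' (fun ω => g1 (X1 ω))) ∧
            (∃ g2 : S2 → SU', AEEq p U' (fun ω => g2 (X2 ω))) ∧
            condMutInfo p X1 X2 U' = 0)
    (hU'min : ∀ (T : Type) [Fintype T] (W : Ω → T),
      (∃ g1 : S1 → T, AEEq p W (fun ω => g1 (X1 ω))) →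
      (∃ g2 : S2 → T, AEEq p W (fun ω => g2 (X2 ω))) →
      condMutInfo p X1 X2 W = 0 → ent p U' ≤ ent p W) :
    ent p U = ent p U' ∧
    (∃ f : SU' → SU, AEEq p U (fun ω => f (U' ω))) ∧
    (∃ f' : SU → SU', AEEq p U' (fun ω => f' (U ω))) := by
  obtain ⟨⟨g1, hg1⟩, ⟨g2, hg2⟩, hciU⟩ := hUc
  obtain ⟨⟨g1', hg1'⟩, ⟨g2', hg2'⟩, hciU'⟩ := hU'c
  -- a point of positive probability
  have hω0 : ∃ ω0 : Ω, p ω0 ≠ 0 := by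
    by_contra hno
    push_neg at hno
    have : ∑ ω : Ω, p ω = 0 := Finset.sum_eq_zero fun ω _ => hno ω
    rw [hp.2] at this
    exact one_ne_zero this
  obtain ⟨ω0, hω0⟩ := hω0
  refine ⟨?_, ?_, ?_⟩
  · exact le_antisymm
      (hUmin SU' U' ⟨g1', hg1'⟩ ⟨g2', hg2'⟩ hciU')
      (hU'min SU U ⟨g1, hg1⟩ ⟨g2, hg2⟩ hciU)
  · -- U is a.s. a function of U'
    refine ⟨fun u' => if h : ∃ ω, p ω ≠ 0 ∧ U' ω = u' then U h.choose else U ω0, ?_⟩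
    intro ω hω
    have hex : ∃ ω₁, p ω₁ ≠ 0 ∧ U' ω₁ = U' ω := ⟨ω, hω, rfl⟩
    simp only [hex, dif_pos]
    have hc := hex.choose_spec
    exact common_eq p hp X1 X2 U' hciU' U g1 hg1 g2 hg2 ω hex.choose hω hc.1 hc.2.symm
  · -- U' is a.s. a function of U
    refine ⟨fun u => if h : ∃ ω, p ω ≠ 0 ∧ U ω = u then U' h.choose else U' ω0, ?_⟩
    intro ω hω
    have hex : ∃ ω₁, p ω₁ ≠ 0 ∧ U ω₁ = U ω := ⟨ω, hω, rfl⟩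
    simp only [hex, dif_pos]
    have hc := hex.choose_spec
    exact common_eq p hp X1 X2 U hciU U' g1' hg1' g2' hg2' ω hex.choose hω hc.1 hc.2.symm
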